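/- Let d ≥ 1, Σ positive definite, θ₀ ∈ ℝ^d, σ > 0, ε > 0, ξ ≥ 0. Suppose there is a subset S ⊆ {1,…,d} such that Σ_{ij} = 0 whenever exactly one of i, j lies in S (i.e. Σ is block diagonal with respect to S and its complement), and suppose θ₀ is supported on S (θ₀ⱼ = 0 for all j ∉ S). Then every global minimizer θ* of the surrogate population adversarial risk R_{L,ξ}(·,ε) is also supported on S: θ*ⱼ = 0 for all j ∉ S. -/

import Mathlib

open MeasureTheory ProbabilityTheory Real Filter Matrix
open scoped RealInnerProductSpace BigOperators NNReal ENNReal Topology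

noncomputable section

/-- The Σ-quadratic form `aᵀ Σ a`. -/
def quadForm {d : ℕ} (S : Matrix (Fin d) (Fin d) ℝ) (a : EuclideanSpace ℝ (Fin d)) : ℝ :=
  ∑ i, ∑ j, a i * S i j * a j

/-- The population adversarial risk of the linear model `f_θ(x) = θᵀx` under squared loss
and `L2` attacks of strength `ε`, for `x ~ N(0,Σ)` and `y = θ₀ᵀx + w`, `w ~ N(0,σ²)`:
`R_L(θ,ε) = ‖θ−θ₀‖²_Σ + σ² + ε²‖θ‖₂² + 2ε√(2/π)‖θ‖₂√(‖θ−θ₀‖²_Σ + σ²)`. -/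
def RL {d : ℕ} (S : Matrix (Fin d) (Fin d) ℝ) (θ0 : EuclideanSpace ℝ (Fin d))
    (σ ε : ℝ) (θ : EuclideanSpace ℝ (Fin d)) : ℝ :=
  quadForm S (θ - θ0) + σ ^ 2 + ε ^ 2 * ‖θ‖ ^ 2 +
    2 * ε * Real.sqrt (2 / Real.pi) * ‖θ‖ * Real.sqrt (quadForm S (θ - θ0) + σ ^ 2)

/-- The surrogate `L2` attack for the linear model `f_θ(x) = θᵀx` under squared loss
`l = (θᵀx − y)²`: the exact attack `A_ε(θ,x,y) = ε sgn(xᵀθ−y) θ/‖θ‖₂` rescaled by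
`‖∂l/∂x‖₂ / √(‖∂l/∂x‖₂² + ξ²)`, where `∂l/∂x = 2θ(xᵀθ−y)`. -/
def surrogateAttack {d : ℕ} (ε ξ : ℝ) (θ x : EuclideanSpace ℝ (Fin d)) (y : ℝ) :
    EuclideanSpace ℝ (Fin d) :=
  ((‖(2 * (⟪θ, x⟫ - y)) • θ‖ / Real.sqrt (‖(2 * (⟪θ, x⟫ - y)) • θ‖ ^ 2 + ξ ^ 2)) *
      (ε * Real.sign (⟪θ, x⟫ - y) / ‖θ‖)) • θ

/-!
Writing `z = ⟪θ, x⟫ - y`, the attacked residual is `z + ε ‖θ‖ sign(z) s(2 ‖θ‖ |z|)` with the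
saturation `s(a) = a / √(a² + ξ²)`. Since `z ~ N(0, v)` with `v = ‖θ - θ₀‖²_Σ + σ²`, the surrogate
risk is a function `R(‖θ‖, v)`, and coupling the Gaussians as `z = √v u` with `u ~ N(0, 1)` shows
`R(t', v') + (v - v') ≤ R(t, v)` whenever `t' ≤ t` and `v' ≤ v`. Zeroing the coordinates of `θ`
outside `S` does not increase `‖θ‖` and, as `Σ` is block diagonal and `θ₀` is supported on `S`,
lowers `v` by the `Σ`-norm of the discarded part, which is positive unless that part vanishes.
-/

namespace LinearSurrogate

lemma integral_sq_gaussianReal (v : ℝ≥0) : ∫ u, u ^ 2 ∂gaussianReal 0 v = v := by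
  rw [← variance_of_integral_eq_zero measurable_id'.aemeasurable integral_id_gaussianReal]
  exact variance_fun_id_gaussianReal

lemma integrable_sq_gaussianReal (v : ℝ≥0) :
    Integrable (fun u : ℝ => u ^ 2) (gaussianReal 0 v) :=
  (memLp_id_gaussianReal 2).integrable_sq

lemma integral_comp_eq_of_hasLaw_gaussianReal {Ω : Type*} [MeasurableSpace Ω] {P : Measure Ω}
    {Z : Ω → ℝ} {v : ℝ≥0} (hZ : HasLaw Z (gaussianReal 0 v) P) {f : ℝ → ℝ} (hf : Measurable f) :
    ∫ ω, f (Z ω) ∂P = ∫ u, f (√v * u) ∂gaussianReal 0 1 := by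
  have hscale : (gaussianReal 0 1).map (√v * ·) = gaussianReal 0 v := by
    rw [gaussianReal_map_const_mul, mul_zero, mul_one]
    congr
    simp
  calc ∫ ω, f (Z ω) ∂P = ∫ z, f z ∂gaussianReal 0 v := hZ.integral_comp hf.aestronglyMeasurable
    _ = ∫ u, f (√v * u) ∂gaussianReal 0 1 := by
      rw [← hscale, integral_map (by fun_prop) hf.aestronglyMeasurable]

lemma hasLaw_sub_of_indepFun_gaussianReal {Ω : Type*} [MeasurableSpace Ω] {P : Measure Ω}
    {X Y : Ω → ℝ} {a b : ℝ≥0} (hXY : IndepFun X Y P)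
    (hX : P.map X = gaussianReal 0 a) (hY : P.map Y = gaussianReal 0 b) :
    HasLaw (fun ω => X ω - Y ω) (gaussianReal 0 (a + b)) P := by
  have hYm : AEMeasurable Y P := .of_map_ne_zero (by simp [hY, IsProbabilityMeasure.ne_zero])
  have hnegY : P.map (Neg.neg ∘ Y) = gaussianReal 0 b := by
    rw [← AEMeasurable.map_map_of_aemeasurable measurable_neg.aemeasurable hYm, hY,
      gaussianReal_map_neg, neg_zero]
  have hsum := gaussianReal_add_gaussianReal_of_indepFun (hXY.comp measurable_id measurable_neg)
    hX hnegY
  have hsub : id ∘ X + Neg.neg ∘ Y = fun ω => X ω - Y ω := by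
    ext; simp [sub_eq_add_neg]
  rw [add_zero, hsub] at hsum
  exact ⟨.of_map_ne_zero (by simp [hsum, IsProbabilityMeasure.ne_zero]), hsum⟩

section AttackedLoss

variable (ε ξ : ℝ)

def saturation (a : ℝ) : ℝ := a / √(a ^ 2 + ξ ^ 2)

@[simp] lemma saturation_zero : saturation ξ 0 = 0 := by simp [saturation]

lemma saturation_nonneg {a : ℝ} (ha : 0 ≤ a) : 0 ≤ saturation ξ a := by
  unfold saturation; positivity

lemma saturation_le_one (a : ℝ) : saturation ξ a ≤ 1 :=
  div_le_one_of_le₀ (Real.le_sqrt_of_sq_le (by nlinarith)) (Real.sqrt_nonneg _)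

lemma saturation_mono {a b : ℝ} (ha : 0 ≤ a) (hab : a ≤ b) :
    saturation ξ a ≤ saturation ξ b := by
  rcases ha.eq_or_lt with rfl | ha
  · simpa using saturation_nonneg ξ hab
  have hb := ha.trans_le hab
  unfold saturation
  rw [div_le_div_iff₀ (by positivity) (by positivity)]
  -- `a² (b² + ξ²) ≤ b² (a² + ξ²)`, after squaring both sides
  refine (pow_le_pow_iff_left₀ (by positivity) (by positivity) two_ne_zero).mp ?_
  rw [mul_pow, mul_pow, Real.sq_sqrt (by positivity), Real.sq_sqrt (by positivity)]
  nlinarith [mul_le_mul hab hab ha.le hb.le, sq_nonneg ξ]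

def attackedLoss (t z : ℝ) : ℝ := (|z| + ε * t * saturation ξ (2 * t * |z|)) ^ 2

lemma attackedLoss_add_le {t t' z z' : ℝ} (hε : 0 ≤ ε) (ht' : 0 ≤ t') (htt' : t' ≤ t)
    (hzz' : |z'| ≤ |z|) :
    attackedLoss ε ξ t' z' + (z ^ 2 - z' ^ 2) ≤ attackedLoss ε ξ t z := by
  have ht : 0 ≤ t := ht'.trans htt'
  have hsat := saturation_mono ξ (by positivity) (by gcongr : 2 * t' * |z'| ≤ 2 * t * |z|)
  have hsat' := saturation_nonneg ξ (by positivity : 0 ≤ 2 * t' * |z'|)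
  have hgain' : 0 ≤ ε * t' * saturation ξ (2 * t' * |z'|) := by positivity
  have hgain : ε * t' * saturation ξ (2 * t' * |z'|) ≤ ε * t * saturation ξ (2 * t * |z|) := by
    gcongr
  unfold attackedLoss
  rw [← sq_abs z, ← sq_abs z']
  nlinarith [mul_le_mul hzz' hgain hgain' (abs_nonneg z)]

lemma attackedLoss_nonneg (t z : ℝ) : 0 ≤ attackedLoss ε ξ t z := sq_nonneg _

lemma attackedLoss_le {t : ℝ} (ht : 0 ≤ t) (z : ℝ) :
    attackedLoss ε ξ t z ≤ 2 * z ^ 2 + 2 * (ε * t) ^ 2 := by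
  have h0 := saturation_nonneg ξ (by positivity : 0 ≤ 2 * t * |z|)
  have h1 := saturation_le_one ξ (2 * t * |z|)
  unfold attackedLoss
  rw [← sq_abs z]
  nlinarith [sq_nonneg (|z| - ε * t * saturation ξ (2 * t * |z|)),
    mul_le_mul h1 h1 h0 zero_le_one, sq_nonneg (ε * t)]

lemma measurable_attackedLoss (t : ℝ) : Measurable (attackedLoss ε ξ t) := by
  unfold attackedLoss saturation
  fun_prop

lemma inner_add_surrogateAttack_sub_sq {d : ℕ} (θ x : EuclideanSpace ℝ (Fin d)) (y : ℝ) :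
    (⟪θ, x + surrogateAttack ε ξ θ x y⟫ - y) ^ 2 = attackedLoss ε ξ ‖θ‖ (⟪θ, x⟫ - y) := by
  set z := ⟪θ, x⟫ - y
  rcases eq_or_ne θ 0 with rfl | hθ
  · simp [attackedLoss, z]
  have hθ : ‖θ‖ ≠ 0 := norm_ne_zero_iff.mpr hθ
  have hnorm : ‖(2 * z) • θ‖ = 2 * ‖θ‖ * |z| := by
    rw [norm_smul, Real.norm_eq_abs, abs_mul, abs_two]; ring
  have hres : ⟪θ, x + surrogateAttack ε ξ θ x y⟫ - y
      = z + Real.sign z * (ε * ‖θ‖ * saturation ξ (2 * ‖θ‖ * |z|)) := by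
    rw [surrogateAttack, inner_add_right, real_inner_smul_right, real_inner_self_eq_norm_sq,
      hnorm, ← saturation]
    field_simp
    ring
  rw [hres, attackedLoss]
  rcases lt_trichotomy z 0 with hz | hz | hz
  · rw [Real.sign_of_neg hz, abs_of_neg hz]; ring
  · simp [hz]
  · rw [Real.sign_of_pos hz, abs_of_pos hz]; ring

def attackedRisk (t v : ℝ) : ℝ := ∫ u, attackedLoss ε ξ t (√v * u) ∂gaussianReal 0 1

lemma integrable_attackedLoss_const_mul {t : ℝ} (ht : 0 ≤ t) (c : ℝ) :
    Integrable (fun u => attackedLoss ε ξ t (c * u)) (gaussianReal 0 1) := by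
  refine (((integrable_sq_gaussianReal 1).const_mul (2 * c ^ 2)).add
    (integrable_const (2 * (ε * t) ^ 2))).mono
    ((measurable_attackedLoss ε ξ t).comp (measurable_const_mul c)).aestronglyMeasurable
    (.of_forall fun u => ?_)
  have hloss := attackedLoss_le ε ξ ht (c * u)
  rw [Pi.add_apply, Real.norm_of_nonneg (attackedLoss_nonneg ε ξ t _),
    Real.norm_of_nonneg (by positivity)]
  linarith [mul_pow c u 2]

lemma attackedRisk_add_le {t t' v v' : ℝ} (hε : 0 ≤ ε) (ht' : 0 ≤ t') (htt' : t' ≤ t)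
    (hv' : 0 ≤ v') (hvv' : v' ≤ v) :
    attackedRisk ε ξ t' v' + (v - v') ≤ attackedRisk ε ξ t v := by
  have hpointwise (u : ℝ) :
      attackedLoss ε ξ t' (√v' * u) + (v - v') * u ^ 2 ≤ attackedLoss ε ξ t (√v * u) := by
    have hzz' : |√v' * u| ≤ |√v * u| := by
      simp only [abs_mul, abs_of_nonneg (Real.sqrt_nonneg _)]
      gcongr
    have h := attackedLoss_add_le ε ξ hε ht' htt' hzz'
    rwa [mul_pow, mul_pow, Real.sq_sqrt hv', Real.sq_sqrt (hv'.trans hvv'), ← sub_mul] at h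
  have hint' := integrable_attackedLoss_const_mul ε ξ ht' √v'
  have hsq := (integrable_sq_gaussianReal 1).const_mul (v - v')
  calc attackedRisk ε ξ t' v' + (v - v')
      = ∫ u, attackedLoss ε ξ t' (√v' * u) + (v - v') * u ^ 2 ∂gaussianReal 0 1 := by
        rw [integral_add hint' hsq, integral_const_mul, integral_sq_gaussianReal, NNReal.coe_one,
          mul_one, attackedRisk]
    _ ≤ attackedRisk ε ξ t v :=
        integral_mono (hint'.add hsq)
          (integrable_attackedLoss_const_mul ε ξ (ht'.trans htt') √v) hpointwise

end AttackedLoss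

section Restrict

variable {ι : Type*} [DecidableEq ι] (s : Finset ι) (v : EuclideanSpace ℝ ι)

def restrictTo : EuclideanSpace ℝ ι := WithLp.toLp 2 fun i => if i ∈ s then v i else 0

@[simp] lemma restrictTo_apply (i : ι) : restrictTo s v i = if i ∈ s then v i else 0 := rfl

lemma norm_restrictTo_le [Fintype ι] : ‖restrictTo s v‖ ≤ ‖v‖ := by
  rw [EuclideanSpace.norm_eq, EuclideanSpace.norm_eq]
  gcongr with i
  by_cases hi : i ∈ s <;> simp [hi]

end Restrict

section QuadForm

variable {d : ℕ} {S : Matrix (Fin d) (Fin d) ℝ}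

lemma quadForm_eq_dotProduct (a : EuclideanSpace ℝ (Fin d)) :
    quadForm S a = star a.ofLp ⬝ᵥ S *ᵥ a.ofLp := by
  simp [quadForm, dotProduct, mulVec, Finset.mul_sum, mul_assoc]

lemma quadForm_nonneg (hS : S.PosSemidef) (a : EuclideanSpace ℝ (Fin d)) : 0 ≤ quadForm S a := by
  rw [quadForm_eq_dotProduct]
  exact hS.dotProduct_mulVec_nonneg _

lemma quadForm_pos (hS : S.PosDef) {a : EuclideanSpace ℝ (Fin d)} (ha : a ≠ 0) :
    0 < quadForm S a := by
  rw [quadForm_eq_dotProduct]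
  exact hS.dotProduct_mulVec_pos (by simpa using ha)

lemma quadForm_add_of_block {s : Finset (Fin d)}
    (hblock : ∀ i j, ((i ∈ s ∧ j ∉ s) ∨ (i ∉ s ∧ j ∈ s)) → S i j = 0)
    {p q : EuclideanSpace ℝ (Fin d)} (hp : ∀ i, i ∉ s → p i = 0) (hq : ∀ i, i ∈ s → q i = 0) :
    quadForm S (p + q) = quadForm S p + quadForm S q := by
  have hcross (i j : Fin d) : p i * S i j * q j + q i * S i j * p j = 0 := by
    by_cases hi : i ∈ s <;> by_cases hj : j ∈ s <;> simp [hi, hj, hp, hq, hblock]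
  simp only [quadForm, ← Finset.sum_add_distrib]
  refine Finset.sum_congr rfl fun i _ => Finset.sum_congr rfl fun j _ => ?_
  simp only [PiLp.add_apply]
  linear_combination hcross i j

end QuadForm

lemma integral_surrogateLoss_eq_attackedRisk {d : ℕ} {S : Matrix (Fin d) (Fin d) ℝ}
    (hS : S.PosSemidef) {θ0 : EuclideanSpace ℝ (Fin d)} {σ ε ξ : ℝ}
    {Ω : Type*} [MeasurableSpace Ω] {μ : Measure Ω}
    {x : Ω → EuclideanSpace ℝ (Fin d)} {w y : Ω → ℝ}
    (hx : ∀ u : EuclideanSpace ℝ (Fin d),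
      μ.map (fun ω => ⟪u, x ω⟫) = gaussianReal 0 (Real.toNNReal (quadForm S u)))
    (hw : μ.map w = gaussianReal 0 (Real.toNNReal (σ ^ 2))) (hindep : IndepFun x w μ)
    (hy : ∀ ω, y ω = ⟪θ0, x ω⟫ + w ω) (θ : EuclideanSpace ℝ (Fin d)) :
    ∫ ω, (⟪θ, x ω + surrogateAttack ε ξ θ (x ω) (y ω)⟫ - y ω) ^ 2 ∂μ
      = attackedRisk ε ξ ‖θ‖ (quadForm S (θ - θ0) + σ ^ 2) := by
  have hresidual (ω : Ω) : ⟪θ, x ω⟫ - y ω = ⟪θ - θ0, x ω⟫ - w ω := by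
    rw [hy, inner_sub_left]; ring
  have hlaw := hasLaw_sub_of_indepFun_gaussianReal (X := fun ω => ⟪θ - θ0, x ω⟫) (Y := w)
    (hindep.comp (continuous_const.inner continuous_id).measurable measurable_id) (hx (θ - θ0)) hw
  rw [← Real.toNNReal_add (quadForm_nonneg hS _) (sq_nonneg σ)] at hlaw
  simp_rw [inner_add_surrogateAttack_sub_sq, hresidual]
  rw [integral_comp_eq_of_hasLaw_gaussianReal hlaw (measurable_attackedLoss ε ξ ‖θ‖),
    Real.coe_toNNReal _ (add_nonneg (quadForm_nonneg hS _) (sq_nonneg σ)), attackedRisk]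

end LinearSurrogate

open LinearSurrogate

theorem surrogate_minimizer_sparsity_preserved
    {d : ℕ} (S : Matrix (Fin d) (Fin d) ℝ) (hS : S.PosDef)
    (θ0 : EuclideanSpace ℝ (Fin d)) (σ ε ξ : ℝ) (hε : 0 < ε)
    (Sset : Finset (Fin d))
    (hblock : ∀ i j, ((i ∈ Sset ∧ j ∉ Sset) ∨ (i ∉ Sset ∧ j ∈ Sset)) → S i j = 0)
    (hsupp : ∀ j, j ∉ Sset → θ0 j = 0)
    {Ω : Type} [MeasurableSpace Ω] (μ : Measure Ω)
    (x : Ω → EuclideanSpace ℝ (Fin d)) (w : Ω → ℝ)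
    (hx : ∀ u : EuclideanSpace ℝ (Fin d),
      Measure.map (fun ω => ⟪u, x ω⟫) μ = gaussianReal 0 (Real.toNNReal (quadForm S u)))
    (hw : Measure.map w μ = gaussianReal 0 (Real.toNNReal (σ ^ 2)))
    (hindep : IndepFun x w μ)
    (y : Ω → ℝ) (hy : ∀ ω, y ω = ⟪θ0, x ω⟫ + w ω)
    (Rxi : EuclideanSpace ℝ (Fin d) → ℝ)
    (hRxi : ∀ θ, Rxi θ =
      ∫ ω, (⟪θ, x ω + surrogateAttack ε ξ θ (x ω) (y ω)⟫ - y ω) ^ 2 ∂μ)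
    (θs : EuclideanSpace ℝ (Fin d))
    (hmin : ∀ θ : EuclideanSpace ℝ (Fin d), Rxi θs ≤ Rxi θ) :
    ∀ j, j ∉ Sset → θs j = 0 := by
  intro j hj
  by_contra hθj
  set θ' := restrictTo Sset θs
  have hsplit : quadForm S (θs - θ0) = quadForm S (θ' - θ0) + quadForm S (θs - θ') := by
    rw [← quadForm_add_of_block hblock, sub_add_sub_cancel']
    · intro i hi
      simp [θ', hi, hsupp i hi]
    · intro i hi
      simp [θ', hi]
  have hoff : 0 < quadForm S (θs - θ') := quadForm_pos hS fun h => hθj <| by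
    simpa [θ', hj] using congrArg (· j) h
  have hrisk := attackedRisk_add_le ε ξ hε.le (norm_nonneg θ') (norm_restrictTo_le Sset θs)
    (add_nonneg (quadForm_nonneg hS.posSemidef (θ' - θ0)) (sq_nonneg σ))
    (by linarith : quadForm S (θ' - θ0) + σ ^ 2 ≤ quadForm S (θs - θ0) + σ ^ 2)
  have hθ' := hmin θ'
  simp only [hRxi, integral_surrogateLoss_eq_attackedRisk hS.posSemidef hx hw hindep hy] at hθ'
  linarith

end
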